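/- arXiv:2309.08749 — 5 statements merged into one kernel-verified Lean document; each statement's English description precedes it below -/
import Mathlib

section
/- Let n ≥ 1. For every smooth function f : ℝ^n × ℝ^n × ℝ^n → ℂ, the symplectic Dirac operator D_s commutes with each of the following operators realising the Lie algebra sp(2n): X_{jk} f = x_j ∂f/∂x_k − y_k ∂f/∂y_j − (q_k ∂f/∂q_j + (1/2)δ_{jk} f) for 1 ≤ j ≤ k ≤ n; Y_{jk} f = x_j ∂f/∂y_k + x_k ∂f/∂y_j + i ∂²f/∂q_j∂q_k for 1 ≤ j < k ≤ n, and Y_{jj} f = x_j ∂f/∂y_j + (i/2) ∂²f/∂q_j² for 1 ≤ j ≤ n; Z_{jk} f = y_j ∂f/∂x_k + y_k ∂f/∂x_j + i q_j q_k f for 1 ≤ j < k ≤ n, and Z_{jj} f = y_j ∂f/∂x_j + (i/2) q_j² f for 1 ≤ j ≤ n. That is, D_s(G f) = G(D_s f) for each such generator G. -/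
/-!
Each generator is a quadratic expression in the multiplication operators `x_j, y_j, q_j` and the
partial derivatives, so its commutator with `D_s` follows from the Leibniz rule and the brackets
`[D_s, x_j] = -∂_{q_j}`, `[D_s, y_j] = i q_j`, `[D_s, q_j] = -∂_{x_j}`,
`[D_s, ∂_{x_j}] = [D_s, ∂_{y_j}] = 0` and `[D_s, ∂_{q_j}] = -i ∂_{y_j}`. For every generator the
resulting terms cancel in pairs once mixed partial derivatives are identified (Schwarz).
-/

open Complex Finset Matrix

noncomputable section

/-- A point of `ℝ^n × ℝ^n × ℝ^n`, with coordinates `(x, y, q)`. -/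
abbrev Vec (n : ℕ) := (Fin n → ℝ) × (Fin n → ℝ) × (Fin n → ℝ)

/-- Partial derivative in the variable `x_j`. -/
noncomputable def pdx (n : ℕ) (j : Fin n) (f : Vec n → ℂ) : Vec n → ℂ :=
  fun p => deriv (fun t => f (Function.update p.1 j t, p.2.1, p.2.2)) (p.1 j)

/-- Partial derivative in the variable `y_j`. -/
noncomputable def pdy (n : ℕ) (j : Fin n) (f : Vec n → ℂ) : Vec n → ℂ :=
  fun p => deriv (fun t => f (p.1, Function.update p.2.1 j t, p.2.2)) (p.2.1 j)

/-- Partial derivative in the variable `q_j`. -/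
noncomputable def pdq (n : ℕ) (j : Fin n) (f : Vec n → ℂ) : Vec n → ℂ :=
  fun p => deriv (fun t => f (p.1, p.2.1, Function.update p.2.2 j t)) (p.2.2 j)

/-- The symplectic Dirac operator `D_s f = Σ_j (i q_j ∂f/∂y_j − ∂²f/∂q_j∂x_j)`. -/
noncomputable def Ds (n : ℕ) (f : Vec n → ℂ) : Vec n → ℂ :=
  fun p => ∑ j : Fin n, (Complex.I * (p.2.2 j : ℂ) * pdy n j f p - pdq n j (pdx n j f) p)

/-- The twisted symplectic Dirac operator `D_t f = Σ_j (i q_j ∂f/∂x_j + ∂²f/∂y_j∂q_j)`. -/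
noncomputable def Dt (n : ℕ) (f : Vec n → ℂ) : Vec n → ℂ :=
  fun p => ∑ j : Fin n, (Complex.I * (p.2.2 j : ℂ) * pdx n j f p + pdy n j (pdq n j f) p)

/-- The Fischer dual `X_s f = Σ_j (y_j ∂f/∂q_j + i q_j x_j f)`. -/
noncomputable def Xs (n : ℕ) (f : Vec n → ℂ) : Vec n → ℂ :=
  fun p => ∑ j : Fin n, ((p.2.1 j : ℂ) * pdq n j f p + Complex.I * (p.2.2 j : ℂ) * (p.1 j : ℂ) * f p)

/-- The Fischer dual `X_t f = Σ_j (x_j ∂f/∂q_j − i y_j q_j f)`. -/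
noncomputable def Xt (n : ℕ) (f : Vec n → ℂ) : Vec n → ℂ :=
  fun p => ∑ j : Fin n, ((p.1 j : ℂ) * pdq n j f p - Complex.I * (p.2.1 j : ℂ) * (p.2.2 j : ℂ) * f p)

/-- The Euler operator `𝔼 f = Σ_j (x_j ∂f/∂x_j + y_j ∂f/∂y_j)`. -/
noncomputable def EulerOp (n : ℕ) (f : Vec n → ℂ) : Vec n → ℂ :=
  fun p => ∑ j : Fin n, ((p.1 j : ℂ) * pdx n j f p + (p.2.1 j : ℂ) * pdy n j f p)

/-- The Laplacian in the `(x,y)` variables. -/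
noncomputable def Lap (n : ℕ) (f : Vec n → ℂ) : Vec n → ℂ :=
  fun p => ∑ j : Fin n, (pdx n j (pdx n j f) p + pdy n j (pdy n j f) p)
/-- `X_{jk} f = x_j ∂f/∂x_k − y_k ∂f/∂y_j − (q_k ∂f/∂q_j + (1/2)δ_{jk} f)`. -/
noncomputable def Xgen (n : ℕ) (j k : Fin n) (g : Vec n → ℂ) : Vec n → ℂ :=
  fun p => (p.1 j : ℂ) * pdx n k g p - (p.2.1 k : ℂ) * pdy n j g p -
    ((p.2.2 k : ℂ) * pdq n j g p + (if j = k then (1 : ℂ) / 2 else 0) * g p)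

/-- `Y_{jk} f = x_j ∂f/∂y_k + x_k ∂f/∂y_j + i ∂²f/∂q_j∂q_k` (for `j < k`). -/
noncomputable def Ygen (n : ℕ) (j k : Fin n) (g : Vec n → ℂ) : Vec n → ℂ :=
  fun p => (p.1 j : ℂ) * pdy n k g p + (p.1 k : ℂ) * pdy n j g p +
    Complex.I * pdq n j (pdq n k g) p

/-- `Y_{jj} f = x_j ∂f/∂y_j + (i/2) ∂²f/∂q_j²`. -/
noncomputable def Ydiag (n : ℕ) (j : Fin n) (g : Vec n → ℂ) : Vec n → ℂ :=
  fun p => (p.1 j : ℂ) * pdy n j g p + Complex.I / 2 * pdq n j (pdq n j g) p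

/-- `Z_{jk} f = y_j ∂f/∂x_k + y_k ∂f/∂x_j + i q_j q_k f` (for `j < k`). -/
noncomputable def Zgen (n : ℕ) (j k : Fin n) (g : Vec n → ℂ) : Vec n → ℂ :=
  fun p => (p.2.1 j : ℂ) * pdx n k g p + (p.2.1 k : ℂ) * pdx n j g p +
    Complex.I * (p.2.2 j : ℂ) * (p.2.2 k : ℂ) * g p

/-- `Z_{jj} f = y_j ∂f/∂x_j + (i/2) q_j² f`. -/
noncomputable def Zdiag (n : ℕ) (j : Fin n) (g : Vec n → ℂ) : Vec n → ℂ :=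
  fun p => (p.2.1 j : ℂ) * pdx n j g p + Complex.I / 2 * (p.2.2 j : ℂ) ^ 2 * g p

open scoped ContDiff

@[fun_prop]
lemma Complex.contDiff_ofReal {k : WithTop ℕ∞} : ContDiff ℝ k Complex.ofReal :=
  ofRealCLM.contDiff

section DirDeriv

variable {E F 𝔸 : Type*} [NormedAddCommGroup E] [NormedSpace ℝ E]
  [NormedAddCommGroup F] [NormedSpace ℝ F] [NormedCommRing 𝔸] [NormedAlgebra ℝ 𝔸]

def dirDeriv (v : E) (f : E → F) : E → F := fun p => fderiv ℝ f p v

@[fun_prop]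
lemma ContDiff.differentiable_of_smooth {f : E → F} (hf : ContDiff ℝ ∞ f) :
    Differentiable ℝ f :=
  hf.differentiable (by simp)

@[fun_prop]
lemma ContDiff.dirDeriv {f : E → F} (hf : ContDiff ℝ ∞ f) (v : E) :
    ContDiff ℝ ∞ (dirDeriv v f) :=
  (hf.fderiv_right (by simp)).clm_apply contDiff_const

lemma dirDeriv_clm (L : E →L[ℝ] F) (v : E) : dirDeriv v L = fun _ => L v := by
  ext p
  simp [dirDeriv, L.fderiv]

@[simp]
lemma dirDeriv_const (v : E) (c : F) : dirDeriv v (fun _ : E => c) = fun _ => 0 := by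
  ext p
  simp [dirDeriv]

lemma dirDeriv_add (v : E) {f g : E → F} (hf : Differentiable ℝ f) (hg : Differentiable ℝ g) :
    dirDeriv v (fun p => f p + g p) = fun p => dirDeriv v f p + dirDeriv v g p := by
  ext p
  simp [dirDeriv, fderiv_fun_add (hf p) (hg p)]

lemma dirDeriv_sub (v : E) {f g : E → F} (hf : Differentiable ℝ f) (hg : Differentiable ℝ g) :
    dirDeriv v (fun p => f p - g p) = fun p => dirDeriv v f p - dirDeriv v g p := by
  ext p
  simp [dirDeriv, fderiv_fun_sub (hf p) (hg p)]

lemma dirDeriv_sum {ι : Type*} (s : Finset ι) (v : E) {f : ι → E → F}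
    (hf : ∀ i ∈ s, Differentiable ℝ (f i)) :
    dirDeriv v (fun p => ∑ i ∈ s, f i p) = fun p => ∑ i ∈ s, dirDeriv v (f i) p := by
  ext p
  simp [dirDeriv, fderiv_fun_sum fun i hi => hf i hi p]

lemma dirDeriv_mul (v : E) {f g : E → 𝔸} (hf : Differentiable ℝ f) (hg : Differentiable ℝ g) :
    dirDeriv v (fun p => f p * g p) = fun p => dirDeriv v f p * g p + f p * dirDeriv v g p := by
  ext p
  simp [dirDeriv, fderiv_fun_mul (hf p) (hg p)]
  ring

lemma dirDeriv_const_mul (v : E) (a : 𝔸) {f : E → 𝔸} (hf : Differentiable ℝ f) :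
    dirDeriv v (fun p => a * f p) = fun p => a * dirDeriv v f p := by
  ext p
  simp [dirDeriv, fderiv_const_mul (hf p)]

lemma dirDeriv_dirDeriv_apply {f : E → F} (hf : Differentiable ℝ (fderiv ℝ f)) (v w : E) (p : E) :
    dirDeriv v (dirDeriv w f) p = fderiv ℝ (fderiv ℝ f) p v w := by
  change fderiv ℝ (fun q => fderiv ℝ f q w) p v = _
  simp [fderiv_clm_apply (hf p) (differentiableAt_const w)]

lemma dirDeriv_comm {f : E → F} (hf : ContDiff ℝ 2 f) (v w : E) :
    dirDeriv v (dirDeriv w f) = dirDeriv w (dirDeriv v f) := by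
  have hf' : Differentiable ℝ (fderiv ℝ f) := (hf.fderiv_right le_rfl).differentiable one_ne_zero
  ext p
  rw [dirDeriv_dirDeriv_apply hf', dirDeriv_dirDeriv_apply hf',
    (hf.contDiffAt.isSymmSndFDerivAt (by simp)).eq]

lemma deriv_comp_eq_dirDeriv {f : E → F} {γ : ℝ → E} {v : E} {t : ℝ}
    (hf : DifferentiableAt ℝ f (γ t)) (hγ : HasDerivAt γ v t) :
    deriv (fun s => f (γ s)) t = dirDeriv v f (γ t) :=
  (hf.hasFDerivAt.comp_hasDerivAt t hγ).deriv

end DirDeriv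

section Coordinates

variable {n : ℕ}

def xUnit (j : Fin n) : Vec n := (Pi.single j 1, 0, 0)
def yUnit (j : Fin n) : Vec n := (0, Pi.single j 1, 0)
def qUnit (j : Fin n) : Vec n := (0, 0, Pi.single j 1)

@[simp] lemma xUnit_fst (j m : Fin n) : (xUnit j).1 m = if m = j then 1 else 0 := by
  simp [xUnit, Pi.single_apply]
@[simp] lemma xUnit_snd_fst (j m : Fin n) : (xUnit j).2.1 m = 0 := rfl
@[simp] lemma xUnit_snd_snd (j m : Fin n) : (xUnit j).2.2 m = 0 := rfl
@[simp] lemma yUnit_fst (j m : Fin n) : (yUnit j).1 m = 0 := rfl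
@[simp] lemma yUnit_snd_fst (j m : Fin n) : (yUnit j).2.1 m = if m = j then 1 else 0 := by
  simp [yUnit, Pi.single_apply]
@[simp] lemma yUnit_snd_snd (j m : Fin n) : (yUnit j).2.2 m = 0 := rfl
@[simp] lemma qUnit_fst (j m : Fin n) : (qUnit j).1 m = 0 := rfl
@[simp] lemma qUnit_snd_fst (j m : Fin n) : (qUnit j).2.1 m = 0 := rfl
@[simp] lemma qUnit_snd_snd (j m : Fin n) : (qUnit j).2.2 m = if m = j then 1 else 0 := by
  simp [qUnit, Pi.single_apply]

lemma pdx_eq_dirDeriv {f : Vec n → ℂ} (hf : Differentiable ℝ f) (j : Fin n) :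
    pdx n j f = dirDeriv (xUnit j) f := by
  ext p
  have hγ : HasDerivAt (fun t => (Function.update p.1 j t, p.2.1, p.2.2)) (xUnit j) (p.1 j) :=
    (hasDerivAt_update p.1 j _).prodMk ((hasDerivAt_const _ _).prodMk (hasDerivAt_const _ _))
  simpa [pdx] using deriv_comp_eq_dirDeriv (hf _) hγ

lemma pdy_eq_dirDeriv {f : Vec n → ℂ} (hf : Differentiable ℝ f) (j : Fin n) :
    pdy n j f = dirDeriv (yUnit j) f := by
  ext p
  have hγ : HasDerivAt (fun t => (p.1, Function.update p.2.1 j t, p.2.2)) (yUnit j) (p.2.1 j) :=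
    (hasDerivAt_const _ _).prodMk ((hasDerivAt_update p.2.1 j _).prodMk (hasDerivAt_const _ _))
  simpa [pdy] using deriv_comp_eq_dirDeriv (hf _) hγ

lemma pdq_eq_dirDeriv {f : Vec n → ℂ} (hf : Differentiable ℝ f) (j : Fin n) :
    pdq n j f = dirDeriv (qUnit j) f := by
  ext p
  have hγ : HasDerivAt (fun t => (p.1, p.2.1, Function.update p.2.2 j t)) (qUnit j) (p.2.2 j) :=
    (hasDerivAt_const _ _).prodMk ((hasDerivAt_const _ _).prodMk (hasDerivAt_update p.2.2 j _))
  simpa [pdq] using deriv_comp_eq_dirDeriv (hf _) hγ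

lemma dirDeriv_xcoord (v : Vec n) (j : Fin n) :
    dirDeriv v (fun p : Vec n => (p.1 j : ℂ)) = fun _ => (v.1 j : ℂ) :=
  dirDeriv_clm (ofRealCLM ∘L ContinuousLinearMap.proj (R := ℝ) (φ := fun _ : Fin n => ℝ) j ∘L
    ContinuousLinearMap.fst ℝ _ _ : Vec n →L[ℝ] ℂ) v

lemma dirDeriv_ycoord (v : Vec n) (j : Fin n) :
    dirDeriv v (fun p : Vec n => (p.2.1 j : ℂ)) = fun _ => (v.2.1 j : ℂ) :=
  dirDeriv_clm (ofRealCLM ∘L ContinuousLinearMap.proj (R := ℝ) (φ := fun _ : Fin n => ℝ) j ∘L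
    ContinuousLinearMap.fst ℝ _ _ ∘L ContinuousLinearMap.snd ℝ _ _ : Vec n →L[ℝ] ℂ) v

lemma dirDeriv_qcoord (v : Vec n) (j : Fin n) :
    dirDeriv v (fun p : Vec n => (p.2.2 j : ℂ)) = fun _ => (v.2.2 j : ℂ) :=
  dirDeriv_clm (ofRealCLM ∘L ContinuousLinearMap.proj (R := ℝ) (φ := fun _ : Fin n => ℝ) j ∘L
    ContinuousLinearMap.snd ℝ _ _ ∘L ContinuousLinearMap.snd ℝ _ _ : Vec n →L[ℝ] ℂ) v

end Coordinates

section SymplecticDirac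

variable {n : ℕ}

lemma Ds_eq_sum_dirDeriv {f : Vec n → ℂ} (hf : ContDiff ℝ ∞ f) :
    Ds n f = fun p => ∑ m, (I * (p.2.2 m : ℂ) * dirDeriv (yUnit m) f p -
      dirDeriv (qUnit m) (dirDeriv (xUnit m) f) p) := by
  have hf' := hf.differentiable_of_smooth
  ext p
  simp only [Ds, pdy_eq_dirDeriv hf', pdx_eq_dirDeriv hf',
    pdq_eq_dirDeriv (hf.dirDeriv _).differentiable_of_smooth]

@[fun_prop]
lemma ContDiff.Ds {f : Vec n → ℂ} (hf : ContDiff ℝ ∞ f) : ContDiff ℝ ∞ (Ds n f) := by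
  rw [Ds_eq_sum_dirDeriv hf]
  fun_prop

lemma Ds_add {f g : Vec n → ℂ} (hf : ContDiff ℝ ∞ f) (hg : ContDiff ℝ ∞ g) :
    Ds n (fun p => f p + g p) = fun p => Ds n f p + Ds n g p := by
  simp (disch := fun_prop) only [Ds_eq_sum_dirDeriv, dirDeriv_add, ← sum_add_distrib]
  ext p
  congr! 1 with m
  ring

lemma Ds_sub {f g : Vec n → ℂ} (hf : ContDiff ℝ ∞ f) (hg : ContDiff ℝ ∞ g) :
    Ds n (fun p => f p - g p) = fun p => Ds n f p - Ds n g p := by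
  simp (disch := fun_prop) only [Ds_eq_sum_dirDeriv, dirDeriv_sub, ← sum_sub_distrib]
  ext p
  congr! 1 with m
  ring

lemma Ds_const_mul (a : ℂ) {f : Vec n → ℂ} (hf : ContDiff ℝ ∞ f) :
    Ds n (fun p => a * f p) = fun p => a * Ds n f p := by
  simp (disch := fun_prop) only [Ds_eq_sum_dirDeriv, dirDeriv_const_mul, mul_sum]
  ext p
  congr! 1 with m
  ring

lemma Ds_xcoord_mul (j : Fin n) {f : Vec n → ℂ} (hf : ContDiff ℝ ∞ f) :
    Ds n (fun p => (p.1 j : ℂ) * f p) =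
      fun p => (p.1 j : ℂ) * Ds n f p - dirDeriv (qUnit j) f p := by
  simp (disch := fun_prop) only [Ds_eq_sum_dirDeriv, dirDeriv_add, dirDeriv_mul, dirDeriv_xcoord,
    dirDeriv_const]
  ext p
  rw [← Fintype.sum_ite_eq j (fun m => dirDeriv (qUnit m) f p), mul_sum, ← sum_sub_distrib]
  refine sum_congr rfl fun m _ => ?_
  split_ifs with h <;> simp [h] <;> ring

lemma Ds_ycoord_mul (j : Fin n) {f : Vec n → ℂ} (hf : ContDiff ℝ ∞ f) :
    Ds n (fun p => (p.2.1 j : ℂ) * f p) =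
      fun p => (p.2.1 j : ℂ) * Ds n f p + I * (p.2.2 j : ℂ) * f p := by
  simp (disch := fun_prop) only [Ds_eq_sum_dirDeriv, dirDeriv_add, dirDeriv_mul, dirDeriv_ycoord,
    dirDeriv_const]
  ext p
  rw [← Fintype.sum_ite_eq j (fun m => I * (p.2.2 m : ℂ) * f p), mul_sum, ← sum_add_distrib]
  refine sum_congr rfl fun m _ => ?_
  split_ifs with h <;> simp [h] <;> ring

lemma Ds_qcoord_mul (j : Fin n) {f : Vec n → ℂ} (hf : ContDiff ℝ ∞ f) :
    Ds n (fun p => (p.2.2 j : ℂ) * f p) =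
      fun p => (p.2.2 j : ℂ) * Ds n f p - dirDeriv (xUnit j) f p := by
  simp (disch := fun_prop) only [Ds_eq_sum_dirDeriv, dirDeriv_add, dirDeriv_mul, dirDeriv_qcoord,
    dirDeriv_const]
  ext p
  rw [← Fintype.sum_ite_eq j (fun m => dirDeriv (xUnit m) f p), mul_sum, ← sum_sub_distrib]
  refine sum_congr rfl fun m _ => ?_
  split_ifs with h <;> simp [h] <;> ring

lemma Ds_dirDeriv (v : Vec n) {f : Vec n → ℂ} (hf : ContDiff ℝ ∞ f) :
    Ds n (dirDeriv v f) =
      fun p => dirDeriv v (Ds n f) p - I * ∑ m, (v.2.2 m : ℂ) * dirDeriv (yUnit m) f p := by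
  have hf2 : ContDiff ℝ 2 f := hf.of_le (by norm_cast)
  simp (disch := fun_prop) only [Ds_eq_sum_dirDeriv, dirDeriv_sum, dirDeriv_sub, dirDeriv_mul,
    dirDeriv_const, dirDeriv_qcoord]
  ext p
  rw [mul_sum, ← sum_sub_distrib]
  refine sum_congr rfl fun m _ => ?_
  rw [dirDeriv_comm hf2 (yUnit m) v, dirDeriv_comm hf2 (xUnit m) v,
    dirDeriv_comm ((hf.dirDeriv _).of_le (by norm_cast)) (qUnit m) v]
  ring

lemma Ds_dirDeriv_xUnit (k : Fin n) {f : Vec n → ℂ} (hf : ContDiff ℝ ∞ f) :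
    Ds n (dirDeriv (xUnit k) f) = dirDeriv (xUnit k) (Ds n f) := by
  simp [Ds_dirDeriv _ hf]

lemma Ds_dirDeriv_yUnit (k : Fin n) {f : Vec n → ℂ} (hf : ContDiff ℝ ∞ f) :
    Ds n (dirDeriv (yUnit k) f) = dirDeriv (yUnit k) (Ds n f) := by
  simp [Ds_dirDeriv _ hf]

lemma Ds_dirDeriv_qUnit (k : Fin n) {f : Vec n → ℂ} (hf : ContDiff ℝ ∞ f) :
    Ds n (dirDeriv (qUnit k) f) =
      fun p => dirDeriv (qUnit k) (Ds n f) p - I * dirDeriv (yUnit k) f p := by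
  simp [Ds_dirDeriv _ hf, apply_ite ((↑) : ℝ → ℂ), ite_mul]

end SymplecticDirac


section Generators

variable {n : ℕ} {f : Vec n → ℂ}

lemma Ds_Xgen (hf : ContDiff ℝ ∞ f) (j k : Fin n) :
    Ds n (Xgen n j k f) = Xgen n j k (Ds n f) := by
  unfold Xgen
  simp (disch := fun_prop) only [pdx_eq_dirDeriv, pdy_eq_dirDeriv, pdq_eq_dirDeriv, Ds_sub, Ds_add,
    Ds_const_mul, Ds_xcoord_mul, Ds_ycoord_mul, Ds_qcoord_mul, Ds_dirDeriv_xUnit,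
    Ds_dirDeriv_yUnit, Ds_dirDeriv_qUnit]
  ext p
  rw [dirDeriv_comm (hf.of_le (by norm_cast)) (qUnit j) (xUnit k)]
  ring

lemma Ds_Ygen (hf : ContDiff ℝ ∞ f) (j k : Fin n) :
    Ds n (Ygen n j k f) = Ygen n j k (Ds n f) := by
  unfold Ygen
  simp (disch := fun_prop) only [pdy_eq_dirDeriv, pdq_eq_dirDeriv, Ds_add, Ds_const_mul,
    Ds_xcoord_mul, Ds_dirDeriv_yUnit, Ds_dirDeriv_qUnit, dirDeriv_sub, dirDeriv_const_mul]
  ext p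
  rw [dirDeriv_comm (hf.of_le (by norm_cast)) (yUnit j) (qUnit k)]
  linear_combination
    -(dirDeriv (qUnit j) (dirDeriv (yUnit k) f) p + dirDeriv (qUnit k) (dirDeriv (yUnit j) f) p) *
      I_sq

lemma Ds_Ydiag (hf : ContDiff ℝ ∞ f) (j : Fin n) :
    Ds n (Ydiag n j f) = Ydiag n j (Ds n f) := by
  unfold Ydiag
  simp (disch := fun_prop) only [pdy_eq_dirDeriv, pdq_eq_dirDeriv, Ds_add, Ds_const_mul,
    Ds_xcoord_mul, Ds_dirDeriv_yUnit, Ds_dirDeriv_qUnit, dirDeriv_sub, dirDeriv_const_mul]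
  ext p
  rw [dirDeriv_comm (hf.of_le (by norm_cast)) (yUnit j) (qUnit j)]
  linear_combination -dirDeriv (qUnit j) (dirDeriv (yUnit j) f) p * I_sq

lemma Ds_Zgen (hf : ContDiff ℝ ∞ f) (j k : Fin n) :
    Ds n (Zgen n j k f) = Zgen n j k (Ds n f) := by
  unfold Zgen
  simp (disch := fun_prop) only [mul_assoc, pdx_eq_dirDeriv, Ds_add, Ds_const_mul, Ds_ycoord_mul,
    Ds_qcoord_mul, Ds_dirDeriv_xUnit, dirDeriv_mul, dirDeriv_qcoord, xUnit_snd_snd, ofReal_zero]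
  ext p
  ring

lemma Ds_Zdiag (hf : ContDiff ℝ ∞ f) (j : Fin n) :
    Ds n (Zdiag n j f) = Zdiag n j (Ds n f) := by
  unfold Zdiag
  simp (disch := fun_prop) only [pow_two, mul_assoc, pdx_eq_dirDeriv, Ds_add, Ds_const_mul,
    Ds_ycoord_mul, Ds_qcoord_mul, Ds_dirDeriv_xUnit, dirDeriv_mul, dirDeriv_qcoord, xUnit_snd_snd,
    ofReal_zero]
  ext p
  ring

end Generators

theorem Ds_invariant_under_sp2n_realisation_general
    (n : ℕ) (f : Vec n → ℂ) (hf : ContDiff ℝ (⊤ : ℕ∞) f) :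
    (∀ j k : Fin n, j ≤ k → Ds n (Xgen n j k f) = Xgen n j k (Ds n f)) ∧
    (∀ j k : Fin n, j < k → Ds n (Ygen n j k f) = Ygen n j k (Ds n f)) ∧
    (∀ j : Fin n, Ds n (Ydiag n j f) = Ydiag n j (Ds n f)) ∧
    (∀ j k : Fin n, j < k → Ds n (Zgen n j k f) = Zgen n j k (Ds n f)) ∧
    (∀ j : Fin n, Ds n (Zdiag n j f) = Zdiag n j (Ds n f)) :=
  ⟨fun j k _ => Ds_Xgen hf j k, fun j k _ => Ds_Ygen hf j k, Ds_Ydiag hf,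
    fun j k _ => Ds_Zgen hf j k, Ds_Zdiag hf⟩

theorem Ds_invariant_under_sp2n_realisation
    (n : ℕ) (hn : 1 ≤ n) (f : Vec n → ℂ) (hf : ContDiff ℝ (⊤ : ℕ∞) f) :
    (∀ j k : Fin n, j ≤ k → Ds n (Xgen n j k f) = Xgen n j k (Ds n f)) ∧
    (∀ j k : Fin n, j < k → Ds n (Ygen n j k f) = Ygen n j k (Ds n f)) ∧
    (∀ j : Fin n, Ds n (Ydiag n j f) = Ydiag n j (Ds n f)) ∧
    (∀ j k : Fin n, j < k → Ds n (Zgen n j k f) = Zgen n j k (Ds n f)) ∧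
    (∀ j : Fin n, Ds n (Zdiag n j f) = Zdiag n j (Ds n f)) :=
  Ds_invariant_under_sp2n_realisation_general n f hf
end
end

section
/- Let n ≥ 1. For every smooth function f : ℝ^n × ℝ^n × ℝ^n → ℂ one has X_s(X_t f) − X_t(X_s f) = −i ( Σ_{j=1}^n (x_j² + y_j²) ) f, i.e. the commutator [X_s, X_t] equals −i times the multiplication operator r² by the squared norm of (x,y). -/
open Complex Finset Matrix

noncomputable section

/-!
Both operators are of first order: `X_s = Σ_j y_j ∂/∂q_j + i⟨q, x⟩` and
`X_t = Σ_j x_j ∂/∂q_j - i⟨y, q⟩`. For operators `D_V + α` and `D_W + β` built from vector fields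
and multiplication operators, the commutator is `D_[V,W] + (D_V β - D_W α)`. Here both vector
fields point in the `q`-directions and have coefficients independent of `q`, so `[V, W] = 0`,
while `D_V β = -i|y|²` and `D_W α = i|x|²`.
-/

open VectorField

section FirstOrderOp

variable {𝕜 : Type*} [NontriviallyNormedField 𝕜] {E : Type*} [NormedAddCommGroup E]
  [NormedSpace 𝕜 E]

lemma fderiv_apply_eq_of_affine {F : Type*} [NormedAddCommGroup F] [NormedSpace 𝕜 F]
    {g : E → F} {x v : E} {c : F} (hg : DifferentiableAt 𝕜 g x)
    (h : ∀ t : 𝕜, g (x + t • v) = g x + t • c) :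
    fderiv 𝕜 g x v = c := by
  rw [← hg.lineDeriv_eq_fderiv, lineDeriv, funext h, deriv_const_add]
  simpa using ((hasDerivAt_id (0 : 𝕜)).smul_const c).deriv

variable {A : Type*} [NormedCommRing A] [NormedAlgebra 𝕜 A]

variable (𝕜) in
def firstOrderOp (V : E → E) (α f : E → A) (x : E) : A :=
  fderiv 𝕜 f x (V x) + α x * f x

variable {V W : E → E} {α β f : E → A} {x : E} {n : WithTop ℕ∞}

lemma ContDiffAt.differentiableAt_fderiv (hf : ContDiffAt 𝕜 n f x) (hn : 2 ≤ n) :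
    DifferentiableAt 𝕜 (fderiv 𝕜 f) x :=
  (hf.fderiv_right (m := 1) (by rwa [one_add_one_eq_two])).differentiableAt one_ne_zero

lemma ContDiff.differentiable_firstOrderOp (hf : ContDiff 𝕜 n f) (hn : 2 ≤ n)
    (hV : Differentiable 𝕜 V) (hα : Differentiable 𝕜 α) :
    Differentiable 𝕜 (firstOrderOp 𝕜 V α f) := fun x =>
  ((hf.contDiffAt.differentiableAt_fderiv hn).clm_apply (hV x)).add
    ((hα x).mul (hf.differentiable (by rintro rfl; simp at hn) x))

lemma fderiv_firstOrderOp_apply (hf : ContDiffAt 𝕜 n f x) (hn : 2 ≤ n)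
    (hV : DifferentiableAt 𝕜 V x) (hα : DifferentiableAt 𝕜 α x) (v : E) :
    fderiv 𝕜 (firstOrderOp 𝕜 V α f) x v =
      fderiv 𝕜 (fun y => fderiv 𝕜 f y (V y)) x v + fderiv 𝕜 α x v * f x
        + α x * fderiv 𝕜 f x v := by
  have hfx : DifferentiableAt 𝕜 f x := hf.differentiableAt (by rintro rfl; simp at hn)
  change fderiv 𝕜 (fun y => fderiv 𝕜 f y (V y) + α y * f y) x v = _
  rw [fderiv_fun_add ((hf.differentiableAt_fderiv hn).clm_apply hV) (hα.fun_mul hfx),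
    fderiv_fun_mul hα hfx]
  simp only [_root_.add_apply, _root_.smul_apply, smul_eq_mul]
  ring

/-- The second-order terms cancel by symmetry of the second derivative. -/
lemma firstOrderOp_commutator (hf : ContDiffAt 𝕜 n f x) (hn : minSmoothness 𝕜 2 ≤ n)
    (hV : DifferentiableAt 𝕜 V x) (hW : DifferentiableAt 𝕜 W x)
    (hα : DifferentiableAt 𝕜 α x) (hβ : DifferentiableAt 𝕜 β x) :
    firstOrderOp 𝕜 V α (firstOrderOp 𝕜 W β f) x - firstOrderOp 𝕜 W β (firstOrderOp 𝕜 V α f) x =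
      fderiv 𝕜 f x (lieBracket 𝕜 V W x) + (fderiv 𝕜 β x (V x) - fderiv 𝕜 α x (W x)) * f x := by
  have h2 : 2 ≤ n := le_minSmoothness.trans hn
  rw [firstOrderOp.eq_1 𝕜 V α (firstOrderOp 𝕜 W β f),
    firstOrderOp.eq_1 𝕜 W β (firstOrderOp 𝕜 V α f), fderiv_firstOrderOp_apply hf h2 hW hβ,
    fderiv_firstOrderOp_apply hf h2 hV hα, fderiv_apply_lieBracket hf hn hW hV]
  simp only [firstOrderOp]
  ring

end FirstOrderOp

section FischerDuals

variable {n : ℕ} {f : Vec n → ℂ} {p : Vec n}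

lemma pdq_eq_fderiv (hf : DifferentiableAt ℝ f p) (j : Fin n) :
    pdq n j f p = fderiv ℝ f p (0, 0, Pi.single j 1) := by
  have hcurve : HasDerivAt (fun t : ℝ => ((p.1, p.2.1, Function.update p.2.2 j t) : Vec n))
      (0, 0, Pi.single j 1) (p.2.2 j) :=
    (hasDerivAt_const _ _).prodMk ((hasDerivAt_const _ _).prodMk (hasDerivAt_update _ _ _))
  have hf' : HasFDerivAt f (fderiv ℝ f p) (p.1, p.2.1, Function.update p.2.2 j (p.2.2 j)) := by
    simpa using hf.hasFDerivAt
  exact (hf'.comp_hasDerivAt _ hcurve).deriv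

lemma sum_mul_pdq_eq_fderiv (hf : DifferentiableAt ℝ f p) (v : Fin n → ℝ) :
    ∑ j, (v j : ℂ) * pdq n j f p = fderiv ℝ f p (0, 0, v) := by
  have hv : ((0, 0, v) : Vec n) = ∑ j, v j • ((0, 0, Pi.single j 1) : Vec n) := by
    ext <;> simp [Prod.fst_sum, Prod.snd_sum, Pi.single_apply]
  rw [hv, map_sum]
  simp only [map_smul, pdq_eq_fderiv hf, Complex.real_smul]

lemma Xs_eq_firstOrderOp (hf : Differentiable ℝ f) :
    Xs n f = firstOrderOp ℝ (fun p : Vec n => (0, 0, p.2.1))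
      (fun p : Vec n => I * ∑ j, (p.2.2 j : ℂ) * (p.1 j : ℂ)) f := by
  funext p
  rw [firstOrderOp, ← sum_mul_pdq_eq_fderiv (hf p), mul_sum, sum_mul, ← sum_add_distrib]
  exact sum_congr rfl fun j _ => by ring

lemma Xt_eq_firstOrderOp (hf : Differentiable ℝ f) :
    Xt n f = firstOrderOp ℝ (fun p : Vec n => (0, 0, p.1))
      (fun p : Vec n => -(I * ∑ j, (p.2.1 j : ℂ) * (p.2.2 j : ℂ))) f := by
  funext p
  rw [firstOrderOp, ← sum_mul_pdq_eq_fderiv (hf p), mul_sum, neg_mul, sum_mul,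
    ← sum_neg_distrib, ← sum_add_distrib]
  exact sum_congr rfl fun j _ => by ring

lemma lieBracket_qFields_eq_zero :
    lieBracket ℝ (fun p : Vec n => (0, 0, p.2.1)) (fun p => (0, 0, p.1)) p = 0 := by
  rw [lieBracket, fderiv_apply_eq_of_affine (c := 0) (by fun_prop) (by simp),
    fderiv_apply_eq_of_affine (c := 0) (by fun_prop) (by simp), sub_zero]

lemma fderiv_I_mul_sum_q_mul_x_apply (w : Fin n → ℝ) :
    fderiv ℝ (fun p : Vec n => I * ∑ j, (p.2.2 j : ℂ) * (p.1 j : ℂ)) p (0, 0, w) =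
      I * ∑ j, (w j : ℂ) * (p.1 j : ℂ) := by
  refine fderiv_apply_eq_of_affine (by fun_prop) fun t => ?_
  simp only [Prod.fst_add, Prod.snd_add, Prod.smul_mk, smul_zero, Pi.add_apply, Pi.zero_apply,
    Pi.smul_apply, smul_eq_mul, ofReal_zero, ofReal_add, ofReal_mul, Complex.real_smul, mul_sum,
    ← sum_add_distrib]
  exact sum_congr rfl fun _ _ => by ring

lemma fderiv_neg_I_mul_sum_y_mul_q_apply (w : Fin n → ℝ) :
    fderiv ℝ (fun p : Vec n => -(I * ∑ j, (p.2.1 j : ℂ) * (p.2.2 j : ℂ))) p (0, 0, w) =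
      -(I * ∑ j, (p.2.1 j : ℂ) * (w j : ℂ)) := by
  refine fderiv_apply_eq_of_affine (by fun_prop) fun t => ?_
  simp only [Prod.fst_add, Prod.snd_add, Prod.smul_mk, smul_zero, Pi.add_apply, Pi.zero_apply,
    Pi.smul_apply, smul_eq_mul, ofReal_zero, ofReal_add, ofReal_mul, Complex.real_smul, mul_sum,
    mul_neg, ← sum_neg_distrib, ← sum_add_distrib]
  exact sum_congr rfl fun _ _ => by ring

end FischerDuals

theorem commutator_Xs_Xt_eq_neg_i_r_squared_general
    (n : ℕ) (f : Vec n → ℂ) (hf : ContDiff ℝ (⊤ : ℕ∞) f) :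
    (fun p => Xs n (Xt n f) p - Xt n (Xs n f) p) =
      (fun p : Vec n => -Complex.I * ((∑ j : Fin n, ((p.1 j) ^ 2 + (p.2.1 j) ^ 2) : ℝ) : ℂ) * f p) := by
  have h2 : (2 : WithTop ℕ∞) ≤ ((⊤ : ℕ∞) : WithTop ℕ∞) := WithTop.coe_le_coe.2 le_top
  have hmin : minSmoothness ℝ 2 ≤ ((⊤ : ℕ∞) : WithTop ℕ∞) := by
    rwa [minSmoothness_of_isRCLikeNormedField]
  have hdiff : Differentiable ℝ f := hf.differentiable (by simp)
  funext p
  rw [Xt_eq_firstOrderOp hdiff, Xs_eq_firstOrderOp hdiff,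
    Xs_eq_firstOrderOp (hf.differentiable_firstOrderOp h2 (by fun_prop) (by fun_prop)),
    Xt_eq_firstOrderOp (hf.differentiable_firstOrderOp h2 (by fun_prop) (by fun_prop)),
    firstOrderOp_commutator hf.contDiffAt hmin (by fun_prop) (by fun_prop) (by fun_prop)
      (by fun_prop), lieBracket_qFields_eq_zero, fderiv_I_mul_sum_q_mul_x_apply,
    fderiv_neg_I_mul_sum_y_mul_q_apply, map_zero, zero_add]
  push_cast
  simp only [sq, sum_add_distrib]
  ring

theorem commutator_Xs_Xt_eq_neg_i_r_squared
    (n : ℕ) (hn : 1 ≤ n) (f : Vec n → ℂ) (hf : ContDiff ℝ (⊤ : ℕ∞) f) :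
    (fun p => Xs n (Xt n f) p - Xt n (Xs n f) p) =
      (fun p : Vec n => -Complex.I * ((∑ j : Fin n, ((p.1 j) ^ 2 + (p.2.1 j) ^ 2) : ℝ) : ℂ) * f p) :=
  commutator_Xs_Xt_eq_neg_i_r_squared_general n f hf
end
end

section
/- Let n ≥ 1. For every smooth function f : ℝ^n × ℝ^n × ℝ^n → ℂ, the pairs (D_s, X_s) and (D_t, X_t) each generate, together with 𝔼 + n, a realisation of sl(2): D_s(X_s f) − X_s(D_s f) = −i (𝔼 f + n f), 𝔼(D_s f) − D_s(𝔼 f) = −D_s f, 𝔼(X_s f) − X_s(𝔼 f) = X_s f; and likewise D_t(X_t f) − X_t(D_t f) = −i (𝔼 f + n f), 𝔼(D_t f) − D_t(𝔼 f) = −D_t f, 𝔼(X_t f) − X_t(𝔼 f) = X_t f. -/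
/-!
Multiplication by the coordinates `x_j, y_j, q_j` and the partial derivatives in these variables,
acting on smooth functions, satisfy the canonical commutation relations: multiplications commute,
derivatives commute (Schwarz), and `⁅∂_a, x_b⁆ = δ_ab` (Leibniz). All six identities already hold
in any ring containing elements with these relations. Expanding the brackets with the Leibniz rule
for `⁅·, ·⁆`, every term with two different indices `j ≠ k` vanishes, and the diagonal terms
give the result; the constant `n` comes from reordering `∂_{x_j} x_j = x_j ∂_{x_j} + 1` for
each `j`.
-/

open Complex Finset Matrix

noncomputable section

open scoped ContDiff

attribute [local instance] LieRing.ofAssociativeRing LieAlgebra.ofAssociativeAlgebra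

theorem Ring.lie_mul {A : Type*} [Ring A] (a b c : A) :
    ⁅a, b * c⁆ = ⁅a, b⁆ * c + b * ⁅a, c⁆ := by
  simp only [Ring.lie_def]
  noncomm_ring

theorem Ring.mul_lie {A : Type*} [Ring A] (a b c : A) :
    ⁅a * b, c⁆ = a * ⁅b, c⁆ + ⁅a, c⁆ * b := by
  simp only [Ring.lie_def]
  noncomm_ring

/-- `pos i` and `mom i` play the roles of multiplication by the coordinate `x_i` and of the
partial derivative `∂/∂x_i`. -/
structure CanonicalCommutation {ι A : Type*} [DecidableEq ι] [Ring A] (pos mom : ι → A) :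
    Prop where
  lie_pos_pos : ∀ i j, ⁅pos i, pos j⁆ = 0
  lie_mom_mom : ∀ i j, ⁅mom i, mom j⁆ = 0
  lie_mom_pos : ∀ i j, ⁅mom i, pos j⁆ = if i = j then 1 else 0

namespace CanonicalCommutation

variable {ι A : Type*} [DecidableEq ι] [Ring A] {pos mom : ι → A}

theorem lie_pos_mom (h : CanonicalCommutation pos mom) (i j : ι) :
    ⁅pos i, mom j⁆ = -if j = i then 1 else 0 := by
  rw [← lie_skew, h.lie_mom_pos]

theorem mom_mul_pos_self (h : CanonicalCommutation pos mom) (i : ι) :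
    mom i * pos i = pos i * mom i + 1 := by
  rw [← sub_eq_iff_eq_add', ← Ring.lie_def, h.lie_mom_pos, if_pos rfl]

end CanonicalCommutation

section SymplecticWeyl

-- The index `(0, j)`, `(1, j)`, `(2, j)` stands for the variable `x_j`, `y_j`, `q_j`.
variable {A : Type*} [Ring A] [Algebra ℂ A] {n : ℕ} (pos mom : Fin 3 × Fin n → A)

def weylDs : A := ∑ j, (I • (pos (2, j) * mom (1, j)) - mom (2, j) * mom (0, j))

def weylDt : A := ∑ j, (I • (pos (2, j) * mom (0, j)) + mom (1, j) * mom (2, j))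

def weylXs : A := ∑ j, (pos (1, j) * mom (2, j) + I • (pos (2, j) * pos (0, j)))

def weylXt : A := ∑ j, (pos (0, j) * mom (2, j) - I • (pos (1, j) * pos (2, j)))

def weylEuler : A := ∑ j, (pos (0, j) * mom (0, j) + pos (1, j) * mom (1, j))

variable {pos mom}

theorem lie_weylDs_weylXs (h : CanonicalCommutation pos mom) :
    ⁅weylDs pos mom, weylXs pos mom⁆ = -I • (weylEuler pos mom + n) := by
  simp only [weylDs, sum_sub_distrib, weylXs, lie_sum, lie_add, Ring.lie_mul, sub_lie, sum_lie,
    smul_lie, Ring.mul_lie, h.lie_mom_pos, Prod.mk.injEq, true_and, mul_ite, mul_one, mul_zero,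
    h.lie_pos_pos, zero_mul, add_zero, smul_ite, smul_zero, sum_ite_eq', mem_univ, ↓reduceIte,
    zero_ne_one, false_and, Fin.reduceEq, sum_const_zero, sub_zero, Algebra.smul_mul_assoc,
    h.lie_mom_mom, h.lie_pos_mom, neg_mul, ite_mul, one_mul, zero_add, smul_neg, sum_neg_distrib,
    sum_ite_eq, mul_neg, Algebra.mul_smul_comm, lie_smul, zero_sub, one_ne_zero, smul_add,
    weylEuler, neg_smul]
  rw [show (n : A) = ∑ _j : Fin n, 1 by simp]
  simp only [h.mom_mul_pos_self, smul_sum, ← sum_neg_distrib, ← sum_add_distrib]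
  refine sum_congr rfl fun j _ => ?_
  module

theorem lie_weylEuler_weylDs (h : CanonicalCommutation pos mom) :
    ⁅weylEuler pos mom, weylDs pos mom⁆ = -weylDs pos mom := by
  simp [weylDs, weylEuler, sum_lie, lie_sum, Ring.mul_lie, Ring.lie_mul, h.lie_pos_pos,
    h.lie_mom_mom, h.lie_mom_pos, h.lie_pos_mom, neg_add_eq_sub]

theorem lie_weylEuler_weylXs (h : CanonicalCommutation pos mom) :
    ⁅weylEuler pos mom, weylXs pos mom⁆ = weylXs pos mom := by
  simp [weylXs, weylEuler, sum_lie, lie_sum, Ring.mul_lie, Ring.lie_mul, h.lie_pos_pos,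
    h.lie_mom_mom, h.lie_mom_pos, h.lie_pos_mom]

theorem lie_weylDt_weylXt (h : CanonicalCommutation pos mom) :
    ⁅weylDt pos mom, weylXt pos mom⁆ = -I • (weylEuler pos mom + n) := by
  simp only [weylDt, weylXt, sum_sub_distrib, lie_sub, lie_sum, Ring.lie_mul, sum_lie, add_lie,
    smul_lie, Ring.mul_lie, h.lie_mom_pos, Prod.mk.injEq, true_and, mul_ite, mul_one, mul_zero,
    h.lie_pos_pos, zero_mul, add_zero, smul_ite, smul_zero, Fin.reduceEq, false_and, ↓reduceIte,
    one_ne_zero, sum_ite_eq', mem_univ, Algebra.smul_mul_assoc, h.lie_mom_mom, h.lie_pos_mom,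
    neg_mul, ite_mul, one_mul, zero_add, smul_neg, sum_neg_distrib, sum_ite_eq, mul_neg,
    Algebra.mul_smul_comm, lie_smul, zero_ne_one, smul_add, weylEuler, neg_smul]
  rw [show (n : A) = ∑ _j : Fin n, 1 by simp]
  simp only [h.mom_mul_pos_self, smul_sum, ← sum_neg_distrib, ← sum_add_distrib,
    ← sum_sub_distrib]
  refine sum_congr rfl fun j _ => ?_
  module

theorem lie_weylEuler_weylDt (h : CanonicalCommutation pos mom) :
    ⁅weylEuler pos mom, weylDt pos mom⁆ = -weylDt pos mom := by
  simp [weylDt, weylEuler, sum_lie, lie_sum, Ring.mul_lie, Ring.lie_mul, h.lie_pos_pos,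
    h.lie_mom_mom, h.lie_mom_pos, h.lie_pos_mom, ← neg_add, -neg_add_rev]

theorem lie_weylEuler_weylXt (h : CanonicalCommutation pos mom) :
    ⁅weylEuler pos mom, weylXt pos mom⁆ = weylXt pos mom := by
  simp [weylXt, weylEuler, sum_lie, lie_sum, Ring.mul_lie, Ring.lie_mul, h.lie_pos_pos,
    h.lie_mom_mom, h.lie_mom_pos, h.lie_pos_mom]

end SymplecticWeyl

section SmoothFunctions

variable (E : Type*) [NormedAddCommGroup E] [NormedSpace ℝ E]

def smoothFunctions : Subalgebra ℂ (E → ℂ) where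
  carrier := {f | ContDiff ℝ ∞ f}
  mul_mem' {f g} (hf : ContDiff ℝ ∞ f) (hg : ContDiff ℝ ∞ g) := hf.mul hg
  add_mem' {f g} (hf : ContDiff ℝ ∞ f) (hg : ContDiff ℝ ∞ g) := hf.add hg
  algebraMap_mem' c := (contDiff_const : ContDiff ℝ ∞ fun _ : E => c)

variable {E}

theorem mem_smoothFunctions {f : E → ℂ} : f ∈ smoothFunctions E ↔ ContDiff ℝ ∞ f := Iff.rfl

theorem contDiff_smoothFunctions (f : smoothFunctions E) : ContDiff ℝ ∞ (f : E → ℂ) := f.2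

theorem differentiable_smoothFunctions (f : smoothFunctions E) : Differentiable ℝ (f : E → ℂ) :=
  (contDiff_smoothFunctions f).differentiable (by simp)

def directionalDeriv (v : E) : Module.End ℂ (smoothFunctions E) where
  toFun f := ⟨fun p => fderiv ℝ (f : E → ℂ) p v, mem_smoothFunctions.2 <|
    ((contDiff_smoothFunctions f).fderiv_right (m := ∞) (by simp)).clm_apply contDiff_const⟩
  map_add' f g := by
    ext p
    simp [fderiv_add (differentiable_smoothFunctions f p) (differentiable_smoothFunctions g p)]
  map_smul' c f := by
    ext p
    simp [fderiv_const_smul (differentiable_smoothFunctions f p)]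

@[simp]
theorem directionalDeriv_apply (v : E) (f : smoothFunctions E) (p : E) :
    (directionalDeriv v f : E → ℂ) p = fderiv ℝ (f : E → ℂ) p v := rfl

theorem deriv_comp_eq_directionalDeriv (g : smoothFunctions E) {c : ℝ → E} {v : E} {t : ℝ}
    (hc : HasDerivAt c v t) :
    deriv (fun s => (g : E → ℂ) (c s)) t = (directionalDeriv v g : E → ℂ) (c t) :=
  ((differentiable_smoothFunctions g _).hasFDerivAt.comp_hasDerivAt t hc).deriv

def coordFun (ℓ : E →L[ℝ] ℝ) : smoothFunctions E :=
  ⟨fun p => (ℓ p : ℂ), mem_smoothFunctions.2 (ofRealCLM.contDiff.comp ℓ.contDiff)⟩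

theorem directionalDeriv_coordFun (v : E) (ℓ : E →L[ℝ] ℝ) :
    directionalDeriv v (coordFun ℓ) = algebraMap ℂ (smoothFunctions E) (ℓ v) := by
  have hℓ : (coordFun ℓ : E → ℂ) = ofRealCLM.comp ℓ := rfl
  ext p
  simp [hℓ, ContinuousLinearMap.fderiv]

theorem commute_directionalDeriv (u v : E) :
    Commute (directionalDeriv u) (directionalDeriv v) := by
  ext f p
  have hf := contDiff_smoothFunctions f
  have hf' : DifferentiableAt ℝ (fderiv ℝ (f : E → ℂ)) p :=
    ((hf.fderiv_right (m := ∞) (by simp)).differentiable (by simp)) p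
  have second_deriv : ∀ u v, (directionalDeriv u (directionalDeriv v f) : E → ℂ) p =
      fderiv ℝ (fderiv ℝ (f : E → ℂ)) p u v := by
    intro u v
    change fderiv ℝ (fun q => fderiv ℝ (f : E → ℂ) q v) p u = _
    rw [fderiv_clm_apply hf' (differentiableAt_const v)]
    simp
  have hsymm : IsSymmSndFDerivAt ℝ (f : E → ℂ) p :=
    hf.contDiffAt.isSymmSndFDerivAt (by simp [minSmoothness_of_isRCLikeNormedField,
      ENat.LEInfty.out])
  simp only [Module.End.mul_apply, second_deriv]
  exact hsymm u v

theorem directionalDeriv_mul_lmul_sub_lmul_mul (v : E) (g : smoothFunctions E) :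
    directionalDeriv v * Algebra.lmul ℂ _ g - Algebra.lmul ℂ _ g * directionalDeriv v =
      Algebra.lmul ℂ (smoothFunctions E) (directionalDeriv v g) := by
  ext f p
  have hf := differentiable_smoothFunctions f p
  have hg := differentiable_smoothFunctions g p
  simp only [Algebra.coe_lmul_eq_mul, LinearMap.sub_apply, Module.End.mul_apply,
    LinearMap.mul_apply_apply, AddSubgroupClass.coe_sub, MulMemClass.coe_mul, Pi.sub_apply,
    directionalDeriv_apply, fderiv_mul hg hf, _root_.add_apply, _root_.smul_apply, smul_eq_mul,
    Pi.mul_apply, add_sub_cancel_left]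
  ring

theorem canonicalCommutation_smoothFunctions {ι : Type*} [DecidableEq ι]
    (ℓ : ι → E →L[ℝ] ℝ) (e : ι → E) (hℓe : ∀ i j, ℓ j (e i) = if i = j then 1 else 0) :
    CanonicalCommutation (fun i => Algebra.lmul ℂ (smoothFunctions E) (coordFun (ℓ i)))
      (fun i => directionalDeriv (e i)) where
  lie_pos_pos i j := ((Commute.all (coordFun (ℓ i)) (coordFun (ℓ j))).map _).lie_eq
  lie_mom_mom i j := (commute_directionalDeriv (e i) (e j)).lie_eq
  lie_mom_pos i j := by
    rw [Ring.lie_def, directionalDeriv_mul_lmul_sub_lmul_mul, directionalDeriv_coordFun,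
      AlgHom.commutes, hℓe]
    split_ifs <;> simp

theorem apply_apply_sub_apply_apply {a b c : Module.End ℂ (smoothFunctions E)}
    (g : smoothFunctions E) (p : E) (h : a * b - b * a = c) :
    (a (b g) : E → ℂ) p - (b (a g) : E → ℂ) p = (c g : E → ℂ) p := by
  simp [← h]

end SmoothFunctions

section PhaseSpace

variable {n : ℕ}

def vecCoord (i : Fin 3 × Fin n) : Vec n →L[ℝ] ℝ :=
  (ContinuousLinearMap.proj i.2).comp
    (![ContinuousLinearMap.fst ℝ _ _,
      (ContinuousLinearMap.fst ℝ _ _).comp (ContinuousLinearMap.snd ℝ _ _),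
      (ContinuousLinearMap.snd ℝ _ _).comp (ContinuousLinearMap.snd ℝ _ _)] i.1)

def vecBasis (i : Fin 3 × Fin n) : Vec n :=
  ![(Pi.single i.2 1, 0, 0), (0, Pi.single i.2 1, 0), (0, 0, Pi.single i.2 1)] i.1

theorem vecCoord_vecBasis (i j : Fin 3 × Fin n) :
    vecCoord j (vecBasis i) = if i = j then 1 else 0 := by
  obtain ⟨a, k⟩ := i
  obtain ⟨b, l⟩ := j
  fin_cases a <;> fin_cases b <;> simp [vecCoord, vecBasis, Pi.single_apply, eq_comm]

def mulCoord (i : Fin 3 × Fin n) : Module.End ℂ (smoothFunctions (Vec n)) :=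
  Algebra.lmul ℂ _ (coordFun (vecCoord i))

def derivCoord (i : Fin 3 × Fin n) : Module.End ℂ (smoothFunctions (Vec n)) :=
  directionalDeriv (vecBasis i)

theorem canonicalCommutation_mulCoord_derivCoord :
    CanonicalCommutation (mulCoord (n := n)) derivCoord :=
  canonicalCommutation_smoothFunctions _ _ vecCoord_vecBasis

theorem pdx_eq_derivCoord (j : Fin n) (g : smoothFunctions (Vec n)) :
    pdx n j g = derivCoord (0, j) g := by
  funext p
  simpa [pdx, derivCoord, vecBasis] using deriv_comp_eq_directionalDeriv g
    ((hasDerivAt_update p.1 j (p.1 j)).prodMk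
      ((hasDerivAt_const _ p.2.1).prodMk (hasDerivAt_const _ p.2.2)))

theorem pdy_eq_derivCoord (j : Fin n) (g : smoothFunctions (Vec n)) :
    pdy n j g = derivCoord (1, j) g := by
  funext p
  simpa [pdy, derivCoord, vecBasis] using deriv_comp_eq_directionalDeriv g
    ((hasDerivAt_const _ p.1).prodMk
      ((hasDerivAt_update p.2.1 j (p.2.1 j)).prodMk (hasDerivAt_const _ p.2.2)))

theorem pdq_eq_derivCoord (j : Fin n) (g : smoothFunctions (Vec n)) :
    pdq n j g = derivCoord (2, j) g := by
  funext p
  simpa [pdq, derivCoord, vecBasis] using deriv_comp_eq_directionalDeriv g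
    ((hasDerivAt_const _ p.1).prodMk
      ((hasDerivAt_const _ p.2.1).prodMk (hasDerivAt_update p.2.2 j (p.2.2 j))))

theorem Ds_eq_weylDs (g : smoothFunctions (Vec n)) :
    Ds n g = weylDs mulCoord derivCoord g := by
  funext p
  simp [Ds, weylDs, pdx_eq_derivCoord, pdy_eq_derivCoord, pdq_eq_derivCoord, mulCoord, coordFun,
    vecCoord, mul_assoc]

theorem Dt_eq_weylDt (g : smoothFunctions (Vec n)) :
    Dt n g = weylDt mulCoord derivCoord g := by
  funext p
  simp [Dt, weylDt, pdx_eq_derivCoord, pdy_eq_derivCoord, pdq_eq_derivCoord, mulCoord, coordFun,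
    vecCoord, mul_assoc]

theorem Xs_eq_weylXs (g : smoothFunctions (Vec n)) :
    Xs n g = weylXs mulCoord derivCoord g := by
  funext p
  simp [Xs, weylXs, pdq_eq_derivCoord, mulCoord, coordFun, vecCoord, mul_assoc]

theorem Xt_eq_weylXt (g : smoothFunctions (Vec n)) :
    Xt n g = weylXt mulCoord derivCoord g := by
  funext p
  simp [Xt, weylXt, pdq_eq_derivCoord, mulCoord, coordFun, vecCoord, mul_assoc]

theorem EulerOp_eq_weylEuler (g : smoothFunctions (Vec n)) :
    EulerOp n g = weylEuler mulCoord derivCoord g := by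
  funext p
  simp [EulerOp, weylEuler, pdx_eq_derivCoord, pdy_eq_derivCoord, mulCoord, coordFun, vecCoord]

end PhaseSpace

theorem sl2_realisations_of_symplectic_Dirac_pairs_general
    (n : ℕ) (f : Vec n → ℂ) (hf : ContDiff ℝ (⊤ : ℕ∞) f) :
    ((fun p => Ds n (Xs n f) p - Xs n (Ds n f) p)
        = (fun p => -Complex.I * (EulerOp n f p + (n : ℂ) * f p))) ∧
    ((fun p => EulerOp n (Ds n f) p - Ds n (EulerOp n f) p) = (fun p => -(Ds n f p))) ∧
    ((fun p => EulerOp n (Xs n f) p - Xs n (EulerOp n f) p) = (fun p => Xs n f p)) ∧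
    ((fun p => Dt n (Xt n f) p - Xt n (Dt n f) p)
        = (fun p => -Complex.I * (EulerOp n f p + (n : ℂ) * f p))) ∧
    ((fun p => EulerOp n (Dt n f) p - Dt n (EulerOp n f) p) = (fun p => -(Dt n f p))) ∧
    ((fun p => EulerOp n (Xt n f) p - Xt n (EulerOp n f) p) = (fun p => Xt n f p)) := by
  obtain ⟨F, rfl⟩ : ∃ F : smoothFunctions (Vec n), (F : Vec n → ℂ) = f := ⟨⟨f, hf⟩, rfl⟩
  have h := canonicalCommutation_mulCoord_derivCoord (n := n)
  simp only [Ds_eq_weylDs, Dt_eq_weylDt, Xs_eq_weylXs, Xt_eq_weylXt, EulerOp_eq_weylEuler]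
  refine ⟨?_, ?_, ?_, ?_, ?_, ?_⟩ <;> funext p
  · simpa [mul_add] using apply_apply_sub_apply_apply F p (lie_weylDs_weylXs h)
  · simpa using apply_apply_sub_apply_apply F p (lie_weylEuler_weylDs h)
  · simpa using apply_apply_sub_apply_apply F p (lie_weylEuler_weylXs h)
  · simpa [mul_add] using apply_apply_sub_apply_apply F p (lie_weylDt_weylXt h)
  · simpa using apply_apply_sub_apply_apply F p (lie_weylEuler_weylDt h)
  · simpa using apply_apply_sub_apply_apply F p (lie_weylEuler_weylXt h)

theorem sl2_realisations_of_symplectic_Dirac_pairs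
    (n : ℕ) (hn : 1 ≤ n) (f : Vec n → ℂ) (hf : ContDiff ℝ (⊤ : ℕ∞) f) :
    ((fun p => Ds n (Xs n f) p - Xs n (Ds n f) p)
        = (fun p => -Complex.I * (EulerOp n f p + (n : ℂ) * f p))) ∧
    ((fun p => EulerOp n (Ds n f) p - Ds n (EulerOp n f) p) = (fun p => -(Ds n f p))) ∧
    ((fun p => EulerOp n (Xs n f) p - Xs n (EulerOp n f) p) = (fun p => Xs n f p)) ∧
    ((fun p => Dt n (Xt n f) p - Xt n (Dt n f) p)
        = (fun p => -Complex.I * (EulerOp n f p + (n : ℂ) * f p))) ∧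
    ((fun p => EulerOp n (Dt n f) p - Dt n (EulerOp n f) p) = (fun p => -(Dt n f p))) ∧
    ((fun p => EulerOp n (Xt n f) p - Xt n (EulerOp n f) p) = (fun p => Xt n f p)) :=
  sl2_realisations_of_symplectic_Dirac_pairs_general n f hf
end
end

section
/- Let n ≥ 1 and let f : ℂ^n → ℂ be holomorphic (complex differentiable on all of ℂ^n). Define F : ℝ^n × ℝ^n × ℝ^n → ℂ by F(x,y,q) = f(x_1 + i y_1, …, x_n + i y_n) · exp(−(1/2) Σ_{j=1}^n q_j²). Then F satisfies both D_s F = 0 and D_t F = 0 identically, i.e. F is symplectic h-monogenic. -/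
open Complex Finset Matrix

noncomputable section

/-!
With `z = x + i y` and `G(q) = exp(-|q|²/2)`, the function is `F = f(z) G(q)`. Holomorphy of `f`
gives `∂F/∂x_j = ∂_j f(z) G` and `∂F/∂y_j = i ∂_j f(z) G` (Cauchy–Riemann), while `∂G/∂q_j = -q_j G`.
Hence `∂²F/∂q_j∂x_j = -q_j ∂_j f(z) G = i q_j ∂F/∂y_j` and `∂²F/∂y_j∂q_j = -i q_j ∂_j f(z) G =
-i q_j ∂F/∂x_j`, so each summand of `D_s F` and of `D_t F` vanishes.
-/

theorem HasDerivAt.comp_update {ι : Type*} [Fintype ι] [DecidableEq ι]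
    {u : (ι → ℂ) → ℂ} {w : ι → ℂ} {j : ι} {φ : ℝ → ℂ} {a : ℂ} {t : ℝ}
    (hφ : HasDerivAt φ a t) (hu : DifferentiableAt ℂ u (Function.update w j (φ t))) :
    HasDerivAt (fun s => u (Function.update w j (φ s)))
      (fderiv ℂ u (Function.update w j (φ t)) (Pi.single j 1) * a) t :=
  (hu.hasFDerivAt.comp_hasDerivAt _ (hasDerivAt_update w j (φ t))).comp t hφ

variable {n : ℕ}

def complexCoords (p : Vec n) : Fin n → ℂ := fun k => (p.1 k : ℂ) + I * (p.2.1 k : ℂ)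

theorem complexCoords_update_fst (p : Vec n) (j : Fin n) (t : ℝ) :
    complexCoords (Function.update p.1 j t, p.2.1, p.2.2) =
      Function.update (complexCoords p) j ((t : ℂ) + I * (p.2.1 j : ℂ)) := by
  funext k
  by_cases hk : k = j
  · subst hk; simp [complexCoords]
  · simp [complexCoords, hk]

theorem complexCoords_update_snd (p : Vec n) (j : Fin n) (t : ℝ) :
    complexCoords (p.1, Function.update p.2.1 j t, p.2.2) =
      Function.update (complexCoords p) j ((p.1 j : ℂ) + I * (t : ℂ)) := by
  funext k
  by_cases hk : k = j
  · subst hk; simp [complexCoords]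
  · simp [complexCoords, hk]

def separated (u : (Fin n → ℂ) → ℂ) (g : (Fin n → ℝ) → ℂ) : Vec n → ℂ :=
  fun p => u (complexCoords p) * g p.2.2

variable {u : (Fin n → ℂ) → ℂ} {g : (Fin n → ℝ) → ℂ}

theorem pdx_separated (j : Fin n) (p : Vec n) (hu : DifferentiableAt ℂ u (complexCoords p)) :
    pdx n j (separated u g) p = fderiv ℂ u (complexCoords p) (Pi.single j 1) * g p.2.2 := by
  have hφ : HasDerivAt (fun t : ℝ => (t : ℂ) + I * (p.2.1 j : ℂ)) 1 (p.1 j) :=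
    (hasDerivAt_id _).ofReal_comp.add_const _
  have hpt : Function.update (complexCoords p) j ((p.1 j : ℂ) + I * (p.2.1 j : ℂ)) =
      complexCoords p := Function.update_eq_self _ _
  have h := (hφ.comp_update (hpt ▸ hu)).mul_const (g p.2.2)
  rw [hpt, mul_one] at h
  simp only [pdx, separated, complexCoords_update_fst]
  exact h.deriv

theorem pdy_separated (j : Fin n) (p : Vec n) (hu : DifferentiableAt ℂ u (complexCoords p)) :
    pdy n j (separated u g) p = I * fderiv ℂ u (complexCoords p) (Pi.single j 1) * g p.2.2 := by
  have hφ : HasDerivAt (fun t : ℝ => (p.1 j : ℂ) + I * (t : ℂ)) I (p.2.1 j) := by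
    simpa using ((hasDerivAt_id _).ofReal_comp.const_mul I).const_add ((p.1 j : ℂ))
  have hpt : Function.update (complexCoords p) j ((p.1 j : ℂ) + I * (p.2.1 j : ℂ)) =
      complexCoords p := Function.update_eq_self _ _
  have h := (hφ.comp_update (hpt ▸ hu)).mul_const (g p.2.2)
  rw [hpt, mul_comm _ I] at h
  simp only [pdy, separated, complexCoords_update_snd]
  exact h.deriv

theorem pdq_separated (j : Fin n) (p : Vec n) :
    pdq n j (separated u g) p =
      u (complexCoords p) * deriv (fun t => g (Function.update p.2.2 j t)) (p.2.2 j) :=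
  deriv_const_mul_field (u (complexCoords p))

def gaussian (q : Fin n → ℝ) : ℂ := exp (-(1 / 2 : ℂ) * ((∑ k, q k ^ 2 : ℝ) : ℂ))

theorem deriv_gaussian_update (q : Fin n → ℝ) (j : Fin n) :
    deriv (fun t => gaussian (Function.update q j t)) (q j) = -(q j : ℂ) * gaussian q := by
  have hsum : HasDerivAt (fun t => ∑ k, Function.update q j t k ^ 2) (2 * q j) (q j) := by
    simp only [Function.apply_update (fun _ (x : ℝ) => x ^ 2),
      Finset.sum_update_of_mem (Finset.mem_univ j)]
    simpa using (hasDerivAt_pow 2 (q j)).add_const (∑ k ∈ Finset.univ \ {j}, q k ^ 2)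
  have h := ((hsum.ofReal_comp).const_mul (-(1 / 2 : ℂ))).cexp
  rw [Function.update_eq_self] at h
  simp only [gaussian]
  rw [h.deriv]
  push_cast
  ring

theorem holomorphic_times_Gaussian_is_symplectic_h_monogenic_general
    (n : ℕ) (f : (Fin n → ℂ) → ℂ) (hf : Differentiable ℂ f) :
    Ds n (fun p : Vec n =>
        f (fun j => (p.1 j : ℂ) + Complex.I * (p.2.1 j : ℂ)) *
          Complex.exp (-(1 / 2 : ℂ) * ((∑ j : Fin n, (p.2.2 j) ^ 2 : ℝ) : ℂ))) = (fun _ => 0) ∧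
    Dt n (fun p : Vec n =>
        f (fun j => (p.1 j : ℂ) + Complex.I * (p.2.1 j : ℂ)) *
          Complex.exp (-(1 / 2 : ℂ) * ((∑ j : Fin n, (p.2.2 j) ^ 2 : ℝ) : ℂ))) = (fun _ => 0) := by
  change Ds n (separated f gaussian) = _ ∧ Dt n (separated f gaussian) = _
  have pdx_eq (j : Fin n) : pdx n j (separated f gaussian) =
      separated (fun w => fderiv ℂ f w (Pi.single j 1)) gaussian :=
    funext fun p => pdx_separated j p (hf _)
  have pdq_eq (j : Fin n) : pdq n j (separated f gaussian) =
      separated f (fun q => -(q j : ℂ) * gaussian q) :=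
    funext fun p => by rw [pdq_separated, deriv_gaussian_update]; rfl
  constructor <;> funext p <;> refine Finset.sum_eq_zero fun j _ => ?_
  · rw [pdx_eq, pdy_separated j p (hf _), pdq_separated, deriv_gaussian_update]
    linear_combination ((p.2.2 j : ℂ) * fderiv ℂ f (complexCoords p) (Pi.single j 1) *
      gaussian p.2.2) * I_sq
  · rw [pdx_separated j p (hf _), pdq_eq, pdy_separated j p (hf _)]
    ring

theorem holomorphic_times_Gaussian_is_symplectic_h_monogenic
    (n : ℕ) (hn : 1 ≤ n) (f : (Fin n → ℂ) → ℂ) (hf : Differentiable ℂ f) :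
    Ds n (fun p : Vec n =>
        f (fun j => (p.1 j : ℂ) + Complex.I * (p.2.1 j : ℂ)) *
          Complex.exp (-(1 / 2 : ℂ) * ((∑ j : Fin n, (p.2.2 j) ^ 2 : ℝ) : ℂ))) = (fun _ => 0) ∧
    Dt n (fun p : Vec n =>
        f (fun j => (p.1 j : ℂ) + Complex.I * (p.2.1 j : ℂ)) *
          Complex.exp (-(1 / 2 : ℂ) * ((∑ j : Fin n, (p.2.2 j) ^ 2 : ℝ) : ℂ))) = (fun _ => 0) :=
  holomorphic_times_Gaussian_is_symplectic_h_monogenic_general n f hf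
end
end

section
/- Let n ≥ 2 and a, b ∈ ℕ. The complex vector space of polynomials P ∈ ℂ[z_1,…,z_n,w_1,…,w_n] that are bi-homogeneous of degree (a,b) — meaning every monomial of P has total degree a in the variables z_1,…,z_n and total degree b in the variables w_1,…,w_n — and harmonic, i.e. Σ_{j=1}^n ∂²P/∂z_j∂w_j = 0, has (finite) dimension ((n + a + b − 1)/(n − 1)) · C(a + n − 2, n − 2) · C(b + n − 2, n − 2). -/
open Complex Finset Matrix

noncomputable section

open MvPolynomial in
/-- The operator `Σ_j ∂²/∂z_j∂w_j`, where the `z`-variables are indexed by `Sum.inl`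
and the `w`-variables (playing the role of the conjugates `z̄_j`) by `Sum.inr`. -/
noncomputable def harmOp (n : ℕ) :
    MvPolynomial (Fin n ⊕ Fin n) ℂ →ₗ[ℂ] MvPolynomial (Fin n ⊕ Fin n) ℂ :=
  ∑ j : Fin n,
    ((pderiv (R := ℂ) (σ := Fin n ⊕ Fin n) (Sum.inl j)).toLinearMap ∘ₗ
      (pderiv (R := ℂ) (σ := Fin n ⊕ Fin n) (Sum.inr j)).toLinearMap)

open MvPolynomial in
/-- The space of polynomials that are bi-homogeneous of bi-degree `(a, b)` (degree `a`
in the `z`-variables and degree `b` in the `w`-variables) and harmonic. -/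
noncomputable def biHarmonics (n a b : ℕ) : Submodule ℂ (MvPolynomial (Fin n ⊕ Fin n) ℂ) :=
  weightedHomogeneousSubmodule ℂ (Sum.elim (fun _ => 1) (fun _ => 0)) a ⊓
    weightedHomogeneousSubmodule ℂ (Sum.elim (fun _ => 0) (fun _ => 1)) b ⊓
    LinearMap.ker (harmOp n)

/-! Write `P(a, b)` for the polynomials of bidegree `(a, b)` and `Δ = Σ_j ∂²/∂z_j∂w_j`. Commuting
`Δ` past multiplication by `|z|² = Σ_j z_j w_j` and applying Euler's identity in both groups of
variables gives `Δ(|z|² p) = |z|² Δp + (n + a + b) p` for `p ∈ P(a, b)`. This endomorphism of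
`P(a, b)` is injective by induction on the bidegree, hence surjective; so
`Δ : P(a+1, b+1) → P(a, b)` is onto and `dim H(a+1, b+1) = dim P(a+1, b+1) - dim P(a, b)`, while
`H(a, b) = P(a, b)` when `a = 0` or `b = 0`. The monomials form a basis of `P(a, b)`, so
`dim P(a, b) = C(n+a-1, a) C(n+b-1, b)`, and the formula is binomial algebra. -/

open MvPolynomial Finsupp

namespace MvPolynomial

variable {R σ τ : Type*} [CommSemiring R]

lemma pderiv_eq_zero_of_isWeightedHomogeneous_zero {w : σ → ℕ} {i : σ} {p : MvPolynomial σ R}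
    (hp : p.IsWeightedHomogeneous w 0) (hi : w i ≠ 0) : pderiv i p = 0 := by
  rw [p.as_sum, map_sum]
  refine Finset.sum_eq_zero fun d hd => ?_
  have hdi : d i = 0 :=
    Nat.le_zero.mp ((le_weight w hi d).trans (hp (mem_support_iff.mp hd)).le)
  simp [pderiv_monomial, hdi]

variable (R σ τ)

def bihomogeneousSubmodule (a b : ℕ) : Submodule R (MvPolynomial (σ ⊕ τ) R) :=
  weightedHomogeneousSubmodule R (Sum.elim (fun _ => 1) (fun _ => 0)) a ⊓
    weightedHomogeneousSubmodule R (Sum.elim (fun _ => 0) (fun _ => 1)) b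

def bidegreeSet (a b : ℕ) : Set (σ ⊕ τ →₀ ℕ) :=
  {d | weight (Sum.elim (fun _ => 1) (fun _ => 0)) d = a ∧
    weight (Sum.elim (fun _ => 0) (fun _ => 1)) d = b}

lemma bihomogeneousSubmodule_eq_restrictSupport (a b : ℕ) :
    bihomogeneousSubmodule R σ τ a b = restrictSupport R (bidegreeSet σ τ a b) := by
  rw [bihomogeneousSubmodule, weightedHomogeneousSubmodule_eq_finsupp_supported,
    weightedHomogeneousSubmodule_eq_finsupp_supported, restrictSupport]
  simp only [AddMonoidAlgebra.supported, ← Submodule.comap_inf, ← supported_inter]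
  rfl

variable {σ τ} [Fintype σ] [Fintype τ]

lemma weight_sumElim_one_zero (d : σ ⊕ τ →₀ ℕ) :
    weight (Sum.elim (fun _ => 1) (fun _ => 0)) d = ∑ i, d (Sum.inl i) := by
  simp [weight_apply, sum_fintype, Fintype.sum_sum_type]

lemma weight_sumElim_zero_one (d : σ ⊕ τ →₀ ℕ) :
    weight (Sum.elim (fun _ => 0) (fun _ => 1)) d = ∑ j, d (Sum.inr j) := by
  simp [weight_apply, sum_fintype, Fintype.sum_sum_type]

variable (σ τ) in
def bidegreeSetEquiv [DecidableEq σ] [DecidableEq τ] (a b : ℕ) :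
    bidegreeSet σ τ a b ≃ Sym σ a × Sym τ b :=
  ((equivFunOnFinite.trans (Equiv.sumArrowEquivProdArrow _ _ _)).subtypeEquiv
      (q := fun f => ∑ i, f.1 i = a ∧ ∑ j, f.2 j = b) fun d => by
        simp [bidegreeSet, weight_sumElim_one_zero, weight_sumElim_zero_one]).trans <|
    Equiv.subtypeProdEquivProd.trans <|
      (Sym.equivNatSumOfFintype σ a).symm.prodCongr (Sym.equivNatSumOfFintype τ b).symm

instance (a b : ℕ) : Module.Finite R (bihomogeneousSubmodule R σ τ a b) := by
  classical
  have := Finite.of_equiv _ (bidegreeSetEquiv σ τ a b).symm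
  rw [bihomogeneousSubmodule_eq_restrictSupport]
  exact Module.Finite.of_basis (basisRestrictSupport R _)

lemma finrank_bihomogeneousSubmodule [StrongRankCondition R] (a b : ℕ) :
    Module.finrank R (bihomogeneousSubmodule R σ τ a b) =
      (Fintype.card σ + a - 1).choose a * (Fintype.card τ + b - 1).choose b := by
  classical
  rw [bihomogeneousSubmodule_eq_restrictSupport,
    Module.finrank_eq_nat_card_basis (basisRestrictSupport R _),
    Nat.card_congr (bidegreeSetEquiv σ τ a b), Nat.card_prod, Nat.card_eq_fintype_card,
    Nat.card_eq_fintype_card, Sym.card_sym_eq_choose, Sym.card_sym_eq_choose]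

end MvPolynomial

section HarmonicOperator

variable {n : ℕ}

local notation "P" => MvPolynomial (Fin n ⊕ Fin n) ℂ

local notation "𝓟" => bihomogeneousSubmodule ℂ (Fin n) (Fin n)

lemma harmOp_apply (p : P) : harmOp n p = ∑ j, pderiv (Sum.inl j) (pderiv (Sum.inr j) p) := by
  simp [harmOp]

variable (n) in
/-- `|z|²`, written `Σ_j z_j w_j` since `w_j` stands for `z̄_j`. -/
def normSqPoly : P := ∑ j : Fin n, X (Sum.inl j) * X (Sum.inr j)

lemma pderiv_inl_normSqPoly (k : Fin n) : pderiv (Sum.inl k) (normSqPoly n) = X (Sum.inr k) := by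
  rw [normSqPoly, map_sum, Finset.sum_eq_single k]
  · simp
  · intro j _ hj
    simp [pderiv_X, hj]
  · simp

lemma pderiv_inr_normSqPoly (k : Fin n) : pderiv (Sum.inr k) (normSqPoly n) = X (Sum.inl k) := by
  rw [normSqPoly, map_sum, Finset.sum_eq_single k]
  · simp
  · intro j _ hj
    simp [pderiv_X, hj]
  · simp

lemma harmOp_normSqPoly_mul (p : P) :
    harmOp n (normSqPoly n * p) = normSqPoly n * harmOp n p + n • p
      + ∑ j, X (Sum.inl j) * pderiv (Sum.inl j) p + ∑ j, X (Sum.inr j) * pderiv (Sum.inr j) p := by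
  have hj (j : Fin n) : pderiv (Sum.inl j) (pderiv (Sum.inr j) (normSqPoly n * p))
      = normSqPoly n * pderiv (Sum.inl j) (pderiv (Sum.inr j) p) + p
        + X (Sum.inl j) * pderiv (Sum.inl j) p + X (Sum.inr j) * pderiv (Sum.inr j) p := by
    simp only [pderiv_mul, map_add, pderiv_inl_normSqPoly, pderiv_inr_normSqPoly, pderiv_X_self]
    ring
  simp only [harmOp_apply, hj, Finset.sum_add_distrib, Finset.mul_sum, Finset.sum_const,
    Finset.card_univ, Fintype.card_fin]

lemma harmOp_normSqPoly_mul_of_mem {a b : ℕ} {p : P} (hp : p ∈ 𝓟 a b) :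
    harmOp n (normSqPoly n * p) = normSqPoly n * harmOp n p + (n + a + b) • p := by
  have euler_z := hp.1.sum_weight_X_mul_pderiv
  have euler_w := hp.2.sum_weight_X_mul_pderiv
  simp only [Fintype.sum_sum_type, Sum.elim_inl, Sum.elim_inr, one_smul, zero_smul,
    Finset.sum_const_zero, add_zero, zero_add] at euler_z euler_w
  rw [harmOp_normSqPoly_mul, euler_z, euler_w, add_smul, add_smul, add_assoc, add_assoc, add_assoc]

lemma harmOp_mem_of_mem_succ {a b : ℕ} {p : P} (hp : p ∈ 𝓟 (a + 1) (b + 1)) :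
    harmOp n p ∈ 𝓟 a b := by
  rw [harmOp_apply]
  refine Submodule.sum_mem _ fun j _ => ⟨?_, ?_⟩
  · exact (hp.1.pderiv (i := Sum.inr j) (add_zero _)).pderiv rfl
  · exact (hp.2.pderiv (i := Sum.inr j) rfl).pderiv (add_zero _)

lemma normSqPoly_mul_mem_succ {a b : ℕ} {p : P} (hp : p ∈ 𝓟 a b) :
    normSqPoly n * p ∈ 𝓟 (a + 1) (b + 1) := by
  have hs : normSqPoly n ∈ 𝓟 1 1 := by
    constructor <;>
    exact IsWeightedHomogeneous.sum _ _ _ fun j _ =>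
      (isWeightedHomogeneous_X ℂ _ (Sum.inl j)).mul (isWeightedHomogeneous_X ℂ _ (Sum.inr j))
  rw [add_comm a, add_comm b]
  exact ⟨hs.1.mul hp.1, hs.2.mul hp.2⟩

lemma harmOp_eq_zero_of_mem_zero_left {b : ℕ} {p : P} (hp : p ∈ 𝓟 0 b) : harmOp n p = 0 := by
  rw [harmOp_apply]
  exact Finset.sum_eq_zero fun j _ =>
    pderiv_eq_zero_of_isWeightedHomogeneous_zero (hp.1.pderiv (i := Sum.inr j) rfl) one_ne_zero

lemma harmOp_eq_zero_of_mem_zero_right {a : ℕ} {p : P} (hp : p ∈ 𝓟 a 0) : harmOp n p = 0 := by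
  rw [harmOp_apply]
  refine Finset.sum_eq_zero fun j _ => ?_
  rw [pderiv_eq_zero_of_isWeightedHomogeneous_zero hp.2 one_ne_zero, map_zero]

lemma eq_zero_of_nsmul_add_normSqPoly_mul_harmOp_eq_zero {a b c : ℕ} {q : P} (hq : q ∈ 𝓟 a b)
    (hc : c ≠ 0) (h : c • q + normSqPoly n * harmOp n q = 0) : q = 0 := by
  induction a generalizing b c q with
  | zero => simpa [harmOp_eq_zero_of_mem_zero_left hq, hc] using h
  | succ a ih =>
    obtain _ | b := b
    · simpa [harmOp_eq_zero_of_mem_zero_right hq, hc] using h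
    -- applying `Δ` gives an equation of the same shape for `Δq`, one bidegree lower
    have hΔq := harmOp_mem_of_mem_succ hq
    have h' : (c + (n + a + b)) • harmOp n q + normSqPoly n * harmOp n (harmOp n q) = 0 := by
      have := congrArg (harmOp n) h
      rw [map_add, map_nsmul, harmOp_normSqPoly_mul_of_mem hΔq, map_zero] at this
      rw [← this, add_smul]
      abel
    simpa [ih hΔq (by omega) h', hc] using h

lemma surjOn_harmOp (hn : n ≠ 0) (a b : ℕ) :
    Set.SurjOn (harmOp n) (𝓟 (a + 1) (b + 1)) (𝓟 a b) := by
  intro p hp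
  let T : 𝓟 a b →ₗ[ℂ] 𝓟 a b := (harmOp n ∘ₗ LinearMap.mulLeft ℂ (normSqPoly n)).restrict
    fun _ hq => harmOp_mem_of_mem_succ (normSqPoly_mul_mem_succ hq)
  have hT : Function.Injective T := by
    rw [← LinearMap.ker_eq_bot, LinearMap.ker_eq_bot']
    rintro ⟨q, hq⟩ hTq
    have h : harmOp n (normSqPoly n * q) = 0 := congrArg Subtype.val hTq
    rw [harmOp_normSqPoly_mul_of_mem hq, add_comm] at h
    exact Subtype.ext (eq_zero_of_nsmul_add_normSqPoly_mul_harmOp_eq_zero hq (by omega) h)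
  obtain ⟨⟨q, hq⟩, hTq⟩ := LinearMap.injective_iff_surjective.mp hT ⟨p, hp⟩
  exact ⟨_, normSqPoly_mul_mem_succ hq, congrArg Subtype.val hTq⟩

end HarmonicOperator

lemma biHarmonics_eq_inf_ker (n a b : ℕ) :
    biHarmonics n a b = bihomogeneousSubmodule ℂ (Fin n) (Fin n) a b ⊓ LinearMap.ker (harmOp n) :=
  rfl

lemma biHarmonics_le (n a b : ℕ) :
    biHarmonics n a b ≤ bihomogeneousSubmodule ℂ (Fin n) (Fin n) a b :=
  inf_le_left

lemma biHarmonics_zero_left (n b : ℕ) :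
    biHarmonics n 0 b = bihomogeneousSubmodule ℂ (Fin n) (Fin n) 0 b :=
  inf_eq_left.mpr fun _ => harmOp_eq_zero_of_mem_zero_left

lemma biHarmonics_zero_right (n a : ℕ) :
    biHarmonics n a 0 = bihomogeneousSubmodule ℂ (Fin n) (Fin n) a 0 :=
  inf_eq_left.mpr fun _ => harmOp_eq_zero_of_mem_zero_right

lemma finrank_biHarmonics_add_finrank (n a b : ℕ) (hn : n ≠ 0) :
    Module.finrank ℂ (biHarmonics n (a + 1) (b + 1)) +
        Module.finrank ℂ (bihomogeneousSubmodule ℂ (Fin n) (Fin n) a b) =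
      Module.finrank ℂ (bihomogeneousSubmodule ℂ (Fin n) (Fin n) (a + 1) (b + 1)) := by
  let Δ := (harmOp n).restrict fun _ => harmOp_mem_of_mem_succ (a := a) (b := b)
  have hrange : LinearMap.range Δ = ⊤ := LinearMap.range_eq_top.mpr fun ⟨p, hp⟩ =>
    let ⟨q, hq, hqp⟩ := surjOn_harmOp hn a b hp
    ⟨⟨q, hq⟩, Subtype.ext hqp⟩
  have hker : LinearMap.ker Δ = (biHarmonics n (a + 1) (b + 1)).comap (Submodule.subtype _) := by
    rw [LinearMap.ker_restrict, biHarmonics_eq_inf_ker, Submodule.comap_inf,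
      Submodule.comap_subtype_self, top_inf_eq]
  rw [← Δ.finrank_range_add_finrank_ker, hrange, finrank_top, hker, add_comm,
    (Submodule.comapSubtypeEquivOfLe (biHarmonics_le ..)).finrank_eq]

lemma Nat.cast_choose_succ_add_eq_div_mul (m a : ℕ) :
    ((m + 1 + a).choose a : ℚ) = (m + 1 + a) / (m + 1) * (m + a).choose m := by
  have h := Nat.add_one_mul_choose_eq (m + a) m
  rw [show m + a + 1 = m + 1 + a by omega] at h
  rw [div_mul_eq_mul_div, eq_div_iff (by positivity), Nat.choose_symm_of_eq_add (Nat.add_comm _ _)]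
  exact_mod_cast h.symm

lemma Nat.cast_choose_succ_add_eq_succ_div_mul (m a : ℕ) :
    ((m + 1 + a).choose a : ℚ) = (a + 1) / (m + 1) * (m + (a + 1)).choose m := by
  have h := Nat.choose_succ_right_eq (m + 1 + a) m
  rw [show m + 1 + a - m = a + 1 by omega] at h
  rw [div_mul_eq_mul_div, eq_div_iff (by positivity), Nat.choose_symm_of_eq_add (Nat.add_comm _ _),
    show m + (a + 1) = m + 1 + a by omega]
  exact_mod_cast h.trans (Nat.mul_comm _ _)

theorem dim_biharmonics (n a b : ℕ) (hn : 2 ≤ n) :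
    (Module.finrank ℂ (biHarmonics n a b) : ℚ) =
      ((n : ℚ) + a + b - 1) / ((n : ℚ) - 1) *
        (Nat.choose (a + n - 2) (n - 2)) * (Nat.choose (b + n - 2) (n - 2)) := by
  obtain ⟨m, rfl⟩ : ∃ m, n = m + 2 := ⟨n - 2, by omega⟩
  have hP (a b : ℕ) :
      (Module.finrank ℂ (bihomogeneousSubmodule ℂ (Fin (m + 2)) (Fin (m + 2)) a b) : ℚ) =
        (m + 1 + a).choose a * (m + 1 + b).choose b := by
    rw [finrank_bihomogeneousSubmodule, Fintype.card_fin, show m + 2 + a - 1 = m + 1 + a by omega,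
      show m + 2 + b - 1 = m + 1 + b by omega, Nat.cast_mul]
  rw [show a + (m + 2) - 2 = m + a by omega, show b + (m + 2) - 2 = m + b by omega,
    Nat.add_sub_cancel, show ((m + 2 : ℕ) : ℚ) - 1 = m + 1 by push_cast; ring]
  obtain _ | a := a
  · rw [biHarmonics_zero_left, hP, Nat.cast_choose_succ_add_eq_div_mul m b]
    simp only [add_zero, Nat.choose_zero_right, Nat.choose_self, Nat.cast_one, one_mul, mul_one]
    push_cast
    ring
  obtain _ | b := b
  · rw [biHarmonics_zero_right, hP, Nat.cast_choose_succ_add_eq_div_mul m (a + 1)]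
    simp only [add_zero, Nat.choose_zero_right, Nat.choose_self, Nat.cast_one, mul_one]
    push_cast
    ring
  have h := finrank_biHarmonics_add_finrank (m + 2) a b (by omega)
  rw [← Nat.cast_inj (R := ℚ), Nat.cast_add, hP, hP] at h
  rw [eq_sub_of_add_eq h, Nat.cast_choose_succ_add_eq_div_mul m (a + 1),
    Nat.cast_choose_succ_add_eq_div_mul m (b + 1), Nat.cast_choose_succ_add_eq_succ_div_mul m a,
    Nat.cast_choose_succ_add_eq_succ_div_mul m b]
  push_cast
  field_simp
  ring
end
end
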